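/- With the topology τ_Γ induced by a well-bounded partition Γ of ℚ, the Hahn field 𝓕 is a topological real vector space: singletons are closed, addition 𝓕 × 𝓕 → 𝓕 is continuous, and scalar multiplication ℝ × 𝓕 → 𝓕 is continuous. -/

import Mathlib

open scoped Classical

/-- The Hahn field `𝓕` of maps `ℚ → ℝ` with well-ordered support. -/
noncomputable abbrev F := HahnSeries ℚ ℝ

/-- A subset `A` of `ℚ` is well-bounded if every nonempty subset of `A`
has a maximum element. -/
def WellBoundedSet (A : Set ℚ) : Prop :=
  ∀ S ⊆ A, S.Nonempty → ∃ m ∈ S, ∀ a ∈ S, a ≤ m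

/-- A well-bounded partition of `ℚ`: a countable family of mutually disjoint
well-bounded sets whose union is all of `ℚ`. -/
def IsWBPartition (γ : ℕ → Set ℚ) : Prop :=
  Pairwise (Function.onFun Disjoint γ) ∧ (∀ i, WellBoundedSet (γ i)) ∧
    (⋃ i, γ i) = Set.univ

/-- A finite well-bounded partition of `ℚ`: each piece is moreover finite. -/
def IsFinWBPartition (γ : ℕ → Set ℚ) : Prop :=
  IsWBPartition γ ∧ ∀ i, (γ i).Finite

/-- `Γ_n`, the union of the first `n` pieces of the partition. -/
def Gam (γ : ℕ → Set ℚ) (n : ℕ) : Set ℚ := ⋃ i < n, γ i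

/-- The semi-norm `‖x‖_{Γ,n} = max {|x[q]| : q ∈ Γ_n}` induced by a well-bounded
partition `Γ` of `ℚ` (realized as a supremum together with `0`). -/
noncomputable def gnorm (γ : ℕ → Set ℚ) (n : ℕ) (x : F) : ℝ :=
  sSup (insert 0 ((fun q => |x.coeff q|) '' Gam γ n))

/-- `μ(r) = ⌈1/r⌉`. -/
noncomputable def mu (r : ℝ) : ℕ := ⌈1 / r⌉₊

/-- The pseudo-ball `B_Γ(x, r) = {y | ‖x − y‖_{Γ,μ(r)} < r}`. -/
def PB (γ : ℕ → Set ℚ) (x : F) (r : ℝ) : Set F :=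
  {y : F | gnorm γ (mu r) (x - y) < r}

/-- The topology `τ_Γ` induced by the semi-norms of the partition `Γ`, as the
collection of its open sets. -/
def Top' (γ : ℕ → Set ℚ) : Set (Set F) :=
  {O : Set F | ∀ x ∈ O, ∃ r : ℝ, 0 < r ∧ PB γ x r ⊆ O}

/-!
A set that is well-founded for both `<` and `>` is finite, so each `Γ_n` meets the
well-ordered support of a Hahn series in finitely many points. Hence `‖·‖_{Γ,n}` is a
genuine maximum of finitely many `|x[q]|`, and `y ∈ B_Γ(x, r)` just says
`|x[q] - y[q]| < r` for all `q ∈ Γ_{μ(r)}`. Shrinking `r` only enlarges `Γ_{μ(r)}`, so all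
three claims reduce to coefficientwise estimates on the fixed set `Γ_{μ(r)}`, plus, for
closed singletons, the fact that every `q` lies in `Γ_{μ(r)}` once `r` is small.
-/

lemma WellBoundedSet.wellFoundedOn_gt {A : Set ℚ} (hA : WellBoundedSet A) :
    A.WellFoundedOn (· > ·) := by
  refine WellFounded.wellFounded_iff_has_min.mpr fun S ⟨a, ha⟩ => ?_
  obtain ⟨m, ⟨⟨m, hmA⟩, hmS, rfl⟩, hmax⟩ :=
    hA (Subtype.val '' S) (by rintro _ ⟨b, -, rfl⟩; exact b.2) ⟨a, a, ha, rfl⟩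
  exact ⟨⟨m, hmA⟩, hmS, fun b hb hlt => (hmax b ⟨b, hb, rfl⟩).not_gt hlt⟩

lemma Set.Finite.of_isWF_of_wellFoundedOn_gt {α : Type*} [LinearOrder α] {s : Set α}
    (hlt : s.IsWF) (hgt : s.WellFoundedOn (· > ·)) : s.Finite :=
  have : WellFoundedLT s := ⟨hlt⟩
  have : WellFoundedGT s := ⟨hgt⟩
  Set.finite_coe_iff.mp (Finite.of_wellFoundedLT_wellFoundedGT s)

lemma Gam_mono (γ : ℕ → Set ℚ) : Monotone (Gam γ) :=
  fun _ _ h => Set.biUnion_mono (fun _ hi => lt_of_lt_of_le hi h) fun _ _ => subset_rfl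

lemma mu_antitoneOn : AntitoneOn mu (Set.Ioi 0) :=
  fun _ hs _ _ h => Nat.ceil_mono (one_div_le_one_div_of_le hs h)

lemma mem_Gam_mu {γ : ℕ → Set ℚ} {i : ℕ} {q : ℚ} (hq : q ∈ γ i) {r : ℝ} (hr : 0 < r)
    (hri : r ≤ 1 / (i + 1)) : q ∈ Gam γ (mu r) := by
  have : (i : ℝ) + 1 ≤ mu r :=
    ((le_one_div hr (by positivity)).mp hri).trans (Nat.le_ceil _)
  exact Set.mem_biUnion (by exact_mod_cast this) hq

section WellBounded

variable {γ : ℕ → Set ℚ} (hwb : ∀ i, WellBoundedSet (γ i))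
include hwb

lemma Gam_wellFoundedOn_gt (n : ℕ) : (Gam γ n).WellFoundedOn (· > ·) := by
  induction n with
  | zero => simp [Gam]
  | succ n ih => rw [Gam, Set.biUnion_lt_succ]; exact ih.union (hwb n).wellFoundedOn_gt

lemma finite_Gam_inter_support (n : ℕ) (x : F) : (Gam γ n ∩ x.support).Finite :=
  .of_isWF_of_wellFoundedOn_gt (x.isWF_support.mono Set.inter_subset_right)
    ((Gam_wellFoundedOn_gt hwb n).subset Set.inter_subset_left)

lemma finite_gnorm_set (n : ℕ) (x : F) :
    (insert 0 ((fun q => |x.coeff q|) '' Gam γ n)).Finite := by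
  refine (((finite_Gam_inter_support hwb n x).image fun q => |x.coeff q|).insert 0).subset ?_
  rintro _ (rfl | ⟨q, hq, rfl⟩)
  · exact Set.mem_insert 0 _
  · by_cases hqx : x.coeff q = 0
    · simp [hqx]
    · exact Set.mem_insert_of_mem _ ⟨q, ⟨hq, hqx⟩, rfl⟩

lemma gnorm_nonneg (n : ℕ) (x : F) : 0 ≤ gnorm γ n x :=
  le_csSup (finite_gnorm_set hwb n x).bddAbove (Set.mem_insert 0 _)

lemma abs_coeff_le_gnorm {n : ℕ} (x : F) {q : ℚ} (hq : q ∈ Gam γ n) :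
    |x.coeff q| ≤ gnorm γ n x :=
  le_csSup (finite_gnorm_set hwb n x).bddAbove (Set.mem_insert_of_mem _ ⟨q, hq, rfl⟩)

lemma gnorm_lt_iff {n : ℕ} {x : F} {r : ℝ} (hr : 0 < r) :
    gnorm γ n x < r ↔ ∀ q ∈ Gam γ n, |x.coeff q| < r := by
  refine ⟨fun h q hq => (abs_coeff_le_gnorm hwb x hq).trans_lt h, fun h => ?_⟩
  rw [gnorm, (finite_gnorm_set hwb n x).csSup_lt_iff (Set.insert_nonempty _ _)]
  rintro _ (rfl | ⟨q, hq, rfl⟩)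
  exacts [hr, h q hq]

lemma mem_PB_iff {x y : F} {r : ℝ} (hr : 0 < r) :
    y ∈ PB γ x r ↔ ∀ q ∈ Gam γ (mu r), |(x - y).coeff q| < r :=
  gnorm_lt_iff hwb hr

lemma abs_coeff_sub_lt_of_mem_PB {x y : F} {r s : ℝ} (hs : 0 < s) (hsr : s ≤ r)
    (hy : y ∈ PB γ x s) {q : ℚ} (hq : q ∈ Gam γ (mu r)) : |x.coeff q - y.coeff q| < s := by
  rw [← HahnSeries.coeff_sub]
  exact (mem_PB_iff hwb hs).mp hy q (Gam_mono γ (mu_antitoneOn hs (hs.trans_le hsr) hsr) hq)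

lemma exists_notMem_PB (huniv : ⋃ i, γ i = Set.univ) {x y : F} (hxy : x ≠ y) :
    ∃ r > 0, y ∉ PB γ x r := by
  obtain ⟨q, hq⟩ : ∃ q, (x - y).coeff q ≠ 0 := by
    by_contra! h
    exact hxy (sub_eq_zero.mp (HahnSeries.ext (funext h)))
  obtain ⟨i, hqi⟩ := Set.mem_iUnion.mp (huniv ▸ Set.mem_univ q)
  set r := min |(x - y).coeff q| (1 / ((i : ℝ) + 1))
  have hr : 0 < r := lt_min (abs_pos.mpr hq) (by positivity)
  refine ⟨r, hr, fun hy => ?_⟩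
  have hlt := (mem_PB_iff hwb hr).mp hy q (mem_Gam_mu hqi hr (min_le_right _ _))
  exact (min_le_left _ _).not_gt hlt

lemma add_mem_PB {x₁ x₂ y z : F} {r : ℝ} (hr : 0 < r) (hy : y ∈ PB γ x₁ (r / 2))
    (hz : z ∈ PB γ x₂ (r / 2)) : y + z ∈ PB γ (x₁ + x₂) r := by
  refine (mem_PB_iff hwb hr).mpr fun q hq => ?_
  have h₁ := abs_coeff_sub_lt_of_mem_PB hwb (half_pos hr) (half_le_self hr.le) hy hq
  have h₂ := abs_coeff_sub_lt_of_mem_PB hwb (half_pos hr) (half_le_self hr.le) hz hq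
  calc |(x₁ + x₂ - (y + z)).coeff q|
      = |(x₁.coeff q - y.coeff q) + (x₂.coeff q - z.coeff q)| := by
        rw [HahnSeries.coeff_sub, HahnSeries.coeff_add, HahnSeries.coeff_add]; congr 1; ring
    _ ≤ |x₁.coeff q - y.coeff q| + |x₂.coeff q - z.coeff q| := abs_add_le _ _
    _ < r := by linarith

lemma exists_smul_mem_PB (α : ℝ) (x : F) {r : ℝ} (hr : 0 < r) :
    ∃ ε > 0, ∃ s > 0, ∀ β : ℝ, |β - α| < ε → ∀ y ∈ PB γ x s, β • y ∈ PB γ (α • x) r := by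
  set M := gnorm γ (mu r) x
  have hM := gnorm_nonneg hwb (mu r) x
  -- chosen so that `|α| δ + δ (M + r) < r`, the bound on `|α x[q] - β y[q]|` below
  set δ := r / (|α| + M + r + 1)
  have hD : 0 < |α| + M + r + 1 := by positivity
  have hδ : 0 < δ := div_pos hr hD
  have hδr : δ ≤ r := div_le_self hr.le (by linarith [abs_nonneg α])
  have hδD : δ * (|α| + M + r + 1) = r := div_mul_cancel₀ r hD.ne'
  refine ⟨δ, hδ, δ, hδ, fun β hβ y hy => (mem_PB_iff hwb hr).mpr fun q hq => ?_⟩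
  have hxy := abs_coeff_sub_lt_of_mem_PB hwb hδ hδr hy hq
  have hx := abs_coeff_le_gnorm hwb x hq
  have hαβ : |α - β| < δ := abs_sub_comm β α ▸ hβ
  have hyq : |y.coeff q| ≤ M + r := by
    have := abs_sub_abs_le_abs_sub (y.coeff q) (x.coeff q)
    rw [abs_sub_comm] at this
    linarith
  calc |(α • x - β • y).coeff q|
      = |α * (x.coeff q - y.coeff q) + (α - β) * y.coeff q| := by
        rw [HahnSeries.coeff_sub, HahnSeries.coeff_smul, HahnSeries.coeff_smul, smul_eq_mul,
          smul_eq_mul]; congr 1; ring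
    _ ≤ |α| * |x.coeff q - y.coeff q| + |α - β| * |y.coeff q| := by
      rw [← abs_mul, ← abs_mul]; exact abs_add_le _ _
    _ ≤ |α| * δ + δ * (M + r) := by gcongr
    _ < r := by nlinarith [abs_nonneg α]

end WellBounded

/-- `(𝓕, τ_Γ)` is a topological real vector space: singletons are closed
(their complements are open), addition is continuous, and scalar multiplication
is continuous. -/
theorem hahn_topological_vector_space (γ : ℕ → Set ℚ) (hγ : IsWBPartition γ) :
    (∀ x : F, ({x}ᶜ : Set F) ∈ Top' γ) ∧
    (∀ O ∈ Top' γ, ∀ x₁ x₂ : F, x₁ + x₂ ∈ O →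
      ∃ r : ℝ, 0 < r ∧ ∀ y ∈ PB γ x₁ r, ∀ z ∈ PB γ x₂ r, y + z ∈ O) ∧
    (∀ O ∈ Top' γ, ∀ (α : ℝ) (x : F), α • x ∈ O →
      ∃ ε : ℝ, 0 < ε ∧ ∃ r : ℝ, 0 < r ∧
        ∀ β : ℝ, |β - α| < ε → ∀ y ∈ PB γ x r, β • y ∈ O) := by
  obtain ⟨-, hwb, huniv⟩ := hγ
  refine ⟨fun x y hyx => ?_, fun O hO x₁ x₂ hx => ?_, fun O hO α x hx => ?_⟩
  · obtain ⟨r, hr, hxr⟩ := exists_notMem_PB hwb huniv hyx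
    exact ⟨r, hr, fun z hz hzx => hxr (hzx ▸ hz)⟩
  · obtain ⟨r, hr, hrO⟩ := hO _ hx
    exact ⟨r / 2, half_pos hr, fun y hy z hz => hrO (add_mem_PB hwb hr hy hz)⟩
  · obtain ⟨r, hr, hrO⟩ := hO _ hx
    obtain ⟨ε, hε, s, hs, hsmul⟩ := exists_smul_mem_PB hwb α x hr
    exact ⟨ε, hε, s, hs, fun β hβ y hy => hrO (hsmul β hβ y hy)⟩
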